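/- arXiv:2411.04803 — 4 statements merged into one kernel-verified Lean document; each statement's English description precedes it below -/
import Mathlib

section
/- Let k ≤ n and let r be the maximal radius such that |B(r)| ≤ 2^{n−k}, where B(r) is the Hamming ball of radius r in 𝔽₂^n. Then for any δ > 0 with ⌊r − δn⌋ ≥ 0, there exists a (2^{k−1}, ⌈|B(⌊r − δn⌋)|/2⌉, δ, n)-subset code. -/
def IsSubsetCode (K T : ℕ) (δ : ℝ) (n : ℕ) (S : Fin K → Set (Fin n → ZMod 2)) : Prop :=
  (∀ p, T ≤ (S p).ncard) ∧
  ∀ p q, p ≠ q → ∀ x ∈ S p, ∀ y ∈ S q, δ * n < (hammingDist x y : ℝ)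

/-- `|B(t)|`: the size of the Hamming ball of radius `t` in `𝔽₂^n`. -/
def ballCount (n t : ℕ) : ℕ := ∑ s ∈ Finset.range (t + 1), n.choose s

/-!
Greedy packing. Each Hamming ball of radius `r` has at most `2^(n-k)` points, so after removing
`2^(k-1)` of them at least `2^(n-1)` points remain. Averaging over all `2^n` centres, some ball of
radius `t = ⌊r - δn⌋` then has at least half of its points among the remaining ones; these form
the next cell. A point of a later cell lies at distance `> r` from every earlier centre, while
points of the earlier cell lie within `t ≤ r - δn` of it, so the triangle inequality separates
the cells by more than `δn`.
-/

open Finset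

section HammingBall

variable {ι : Type*} [Fintype ι] [DecidableEq ι]

def diffSetEquiv (c : ι → ZMod 2) : (ι → ZMod 2) ≃ Finset ι where
  toFun x := {j | x j ≠ c j}
  invFun F j := if j ∈ F then c j + 1 else c j
  left_inv x := by
    funext j
    have key : ∀ a b : ZMod 2, (if a ≠ b then b + 1 else b) = a := by decide
    simpa using key (x j) (c j)
  right_inv F := by
    ext j
    have key : ∀ b : ZMod 2, b + 1 ≠ b := by decide
    by_cases hj : j ∈ F <;> simp [hj, key]

lemma card_diffSetEquiv (c x : ι → ZMod 2) : #(diffSetEquiv c x) = hammingDist x c := rfl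

lemma card_filter_hammingDist_eq (c : ι → ZMod 2) (i : ℕ) :
    #{x | hammingDist x c = i} = (Fintype.card ι).choose i := by
  rw [← Fintype.card_finset_len, ← Fintype.card_subtype]
  exact Fintype.card_congr ((diffSetEquiv c).subtypeEquiv fun x => by rw [card_diffSetEquiv])

lemma card_filter_hammingDist_le (c : ι → ZMod 2) (t : ℕ) :
    #{x | hammingDist x c ≤ t} = ballCount (Fintype.card ι) t := by
  rw [card_eq_sum_card_fiberwise (f := fun x => hammingDist x c) (t := range (t + 1))]
  · refine sum_congr rfl fun i hi => ?_
    rw [filter_filter, ← card_filter_hammingDist_eq c i]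
    congr 1
    ext x
    simp only [mem_filter, mem_univ, true_and, and_iff_right_iff_imp]
    rintro rfl
    exact Nat.lt_succ_iff.1 (mem_range.1 hi)
  · intro x hx
    simpa [Nat.lt_succ_iff] using hx

lemma sum_card_filter_hammingDist_le (P : Finset (ι → ZMod 2)) (t : ℕ) :
    ∑ s, #{x ∈ P | hammingDist x s ≤ t} = #P * ballCount (Fintype.card ι) t := by
  have := sum_card_bipartiteAbove_eq_sum_card_bipartiteBelow (fun x s => hammingDist x s ≤ t)
    (s := P) (t := univ)
  simp only [bipartiteAbove, bipartiteBelow] at this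
  rw [← this, ← smul_eq_mul, ← sum_const]
  refine sum_congr rfl fun x _ => ?_
  simp_rw [hammingDist_comm x]
  exact card_filter_hammingDist_le x t

lemma exists_card_mul_ballCount_le (P : Finset (ι → ZMod 2)) (t : ℕ) :
    ∃ s, #P * ballCount (Fintype.card ι) t ≤
      2 ^ Fintype.card ι * #{x ∈ P | hammingDist x s ≤ t} := by
  obtain ⟨s, -, hs⟩ := exists_le_of_sum_le univ_nonempty (s := univ)
    (f := fun _ => #P * ballCount (Fintype.card ι) t)
    (g := fun s => 2 ^ Fintype.card ι * #{x ∈ P | hammingDist x s ≤ t}) (by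
      rw [sum_const, ← mul_sum, sum_card_filter_hammingDist_le, card_univ, Fintype.card_fun,
        ZMod.card, smul_eq_mul])
  exact ⟨s, hs⟩

end HammingBall

section Greedy

variable {ι β : Type*} [Fintype ι] [DecidableEq ι] [Fintype β] [DecidableEq β]
  (center : Finset (ι → β) → ι → β) (r t : ℕ)

def greedyRemaining : ℕ → Finset (ι → β)
  | 0 => univ
  | i + 1 => {x ∈ greedyRemaining i | r < hammingDist x (center (greedyRemaining i))}

def greedyCell (i : ℕ) : Finset (ι → β) :=
  {x ∈ greedyRemaining center r i | hammingDist x (center (greedyRemaining center r i)) ≤ t}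

lemma greedyRemaining_antitone : Antitone (greedyRemaining center r) :=
  antitone_nat_of_succ_le fun _ => filter_subset _ _

lemma card_le_card_greedyRemaining_add {b : ℕ}
    (hb : ∀ c : ι → β, #{x | hammingDist x c ≤ r} ≤ b) (i : ℕ) :
    Fintype.card (ι → β) ≤ #(greedyRemaining center r i) + i * b := by
  induction i with
  | zero => simp [greedyRemaining]
  | succ i ih =>
    rw [greedyRemaining, Nat.succ_mul]
    set R := greedyRemaining center r i
    have hball : #{x ∈ R | ¬r < hammingDist x (center R)} ≤ b :=
      (card_le_card fun x hx => by simpa using (mem_filter.1 hx).2).trans (hb (center R))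
    have hsplit := card_filter_add_card_filter_not (s := R) fun x => r < hammingDist x (center R)
    omega

lemma lt_hammingDist_center {i j : ℕ} (hij : i < j) {y : ι → β}
    (hy : y ∈ greedyRemaining center r j) :
    r < hammingDist y (center (greedyRemaining center r i)) :=
  (mem_filter.1 (greedyRemaining_antitone center r hij hy)).2

lemma lt_add_hammingDist_of_mem_greedyCell {i j : ℕ} (hij : i ≠ j) {x y : ι → β}
    (hx : x ∈ greedyCell center r t i) (hy : y ∈ greedyCell center r t j) :
    r < t + hammingDist x y := by
  wlog hlt : i < j generalizing i j x y
  · rw [hammingDist_comm]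
    exact this hij.symm hy hx (by omega)
  have hyc := lt_hammingDist_center center r hlt (mem_filter.1 hy).1
  have hxc := (mem_filter.1 hx).2
  have htri := hammingDist_triangle y x (center (greedyRemaining center r i))
  rw [hammingDist_comm y x] at htri
  omega

end Greedy

lemma two_pow_pred_le_card_greedyRemaining {n k r i : ℕ}
    (center : Finset (Fin n → ZMod 2) → Fin n → ZMod 2) (hk1 : 1 ≤ k) (hk : k ≤ n)
    (hr : ballCount n r ≤ 2 ^ (n - k)) (hi : i ≤ 2 ^ (k - 1)) :
    2 ^ (n - 1) ≤ #(greedyRemaining center r i) := by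
  have hcard := card_le_card_greedyRemaining_add center r
    (fun c => (card_filter_hammingDist_le c r).le) i
  have hsplit : 2 ^ (k - 1) * 2 ^ (n - k) = 2 ^ (n - 1) := by
    rw [← pow_add]
    congr 1
    omega
  have hn : 2 ^ n = 2 ^ (n - 1) + 2 ^ (n - 1) := by
    rw [← two_mul, ← pow_succ']
    congr 1
    omega
  have hremoved := Nat.mul_le_mul hi hr
  simp only [Fintype.card_fun, ZMod.card, Fintype.card_fin] at hcard
  omega

lemma ballCount_le_two_mul_card_greedyCell {n k r t i : ℕ}
    {center : Finset (Fin n → ZMod 2) → Fin n → ZMod 2}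
    (hcenter : ∀ P, #P * ballCount n t ≤ 2 ^ n * #{x ∈ P | hammingDist x (center P) ≤ t})
    (hk1 : 1 ≤ k) (hk : k ≤ n) (hr : ballCount n r ≤ 2 ^ (n - k)) (hi : i ≤ 2 ^ (k - 1)) :
    ballCount n t ≤ 2 * #(greedyCell center r t i) := by
  have hR := two_pow_pred_le_card_greedyRemaining center hk1 hk hr hi
  refine Nat.le_of_mul_le_mul_left (?_ : 2 ^ (n - 1) * _ ≤ 2 ^ (n - 1) * _) (by positivity)
  calc 2 ^ (n - 1) * ballCount n t
      ≤ #(greedyRemaining center r i) * ballCount n t := Nat.mul_le_mul_right _ hR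
    _ ≤ 2 ^ n * #(greedyCell center r t i) := hcenter _
    _ = 2 ^ (n - 1) * (2 * #(greedyCell center r t i)) := by
      rw [← mul_assoc, ← pow_succ]
      congr 2
      omega

theorem exists_greedy_subset_code_general
    (n k r : ℕ) (δ : ℝ) (hk1 : 1 ≤ k) (hk : k ≤ n) (hδr : δ * n ≤ r)
    (hr : ballCount n r ≤ 2 ^ (n - k)) :
    ∃ S : Fin (2 ^ (k - 1)) → Set (Fin n → ZMod 2),
      IsSubsetCode (2 ^ (k - 1)) ((ballCount n ⌊(r : ℝ) - δ * n⌋₊ + 1) / 2) δ n S := by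
  set t := ⌊(r : ℝ) - δ * n⌋₊
  choose center hcenter using fun P : Finset (Fin n → ZMod 2) => exists_card_mul_ballCount_le P t
  simp only [Fintype.card_fin] at hcenter
  refine ⟨fun p => greedyCell center r t p, fun p => ?_, fun p q hpq x hx y hy => ?_⟩
  · have hcard := ballCount_le_two_mul_card_greedyCell hcenter hk1 hk hr p.isLt.le
    rw [Set.ncard_coe_finset]
    omega
  · have hsep := lt_add_hammingDist_of_mem_greedyCell center r t (Fin.val_injective.ne hpq) hx hy
    have ht : (t : ℝ) ≤ r - δ * n := Nat.floor_le (by linarith)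
    have hsep_real : (r : ℝ) < t + hammingDist x y := by exact_mod_cast hsep
    linarith

/-- If `r` is the maximal radius with `|B(r)| ≤ 2^(n−k)`, then for any `δ > 0` with
`r − δn ≥ 0` there exists a `(2^(k−1), ⌈|B(⌊r − δn⌋)| / 2⌉, δ, n)`-subset code.
(In ℕ, `⌈m/2⌉ = (m+1)/2`.) -/
theorem exists_greedy_subset_code
    (n k r : ℕ) (δ : ℝ) (hk1 : 1 ≤ k) (hk : k ≤ n) (hδ : 0 < δ) (hδr : δ * n ≤ r)
    (hr : ballCount n r ≤ 2 ^ (n - k))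
    (hrmax : ∀ r', ballCount n r' ≤ 2 ^ (n - k) → r' ≤ r) :
    ∃ S : Fin (2 ^ (k - 1)) → Set (Fin n → ZMod 2),
      IsSubsetCode (2 ^ (k - 1)) ((ballCount n ⌊(r : ℝ) - δ * n⌋₊ + 1) / 2) δ n S :=
  exists_greedy_subset_code_general n k r δ hk1 hk hδr hr
end

section
/- Let S ⊆ 𝔽₂^n be an affine subspace of dimension d. Then |S + B(t)| ≥ 2^d · binom(n − d, ≤ t), where B(t) is the Hamming ball of radius t around 0 and + denotes Minkowski sum. -/
open Module Finset

theorem ballCount_mono_left (t : ℕ) : Monotone (ballCount · t) :=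
  fun _ _ h => sum_le_sum fun s _ => Nat.choose_le_choose s h

theorem card_filter_powerset_card_le {α : Type*} [DecidableEq α] (J : Finset α) (t : ℕ) :
    #{T ∈ J.powerset | #T ≤ t} = ballCount #J t := by
  rw [ballCount, ← sum_congr rfl fun s _ => card_powersetCard s J,
    ← card_biUnion fun s _ s' _ h => J.pairwise_disjoint_powersetCard h]
  congr 1
  ext T
  simp [mem_powersetCard, and_comm]

theorem Submodule.exists_finset_card_le_finrank_forall_eq_zero {K ι : Type*} [Field K]
    [Finite ι] (V : Submodule K (ι → K)) :
    ∃ I : Finset ι, #I ≤ finrank K V ∧ ∀ v ∈ V, (∀ i ∈ I, v i = 0) → v = 0 := by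
  classical
  have := Fintype.ofFinite ι
  let f : ι → Dual K V := fun i => (LinearMap.proj i).comp V.subtype
  obtain ⟨b, -, -, hspan, hli⟩ :=
    exists_linearIndepOn_extension (linearIndepOn_empty K f) (Set.subset_univ _)
  refine ⟨b.toFinset, ?_, fun v hv hvI => ?_⟩
  · simpa [Set.toFinset_card] using hli.fintype_card_le_finrank
  · have : span K (f '' b) ≤ LinearMap.ker (Dual.eval K V ⟨v, hv⟩) :=
      Submodule.span_le.mpr <| by
        rintro _ ⟨i, hi, rfl⟩
        exact hvI i (Set.mem_toFinset.mpr hi)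
    funext j
    exact this (hspan ⟨j, trivial, rfl⟩)

theorem Submodule.injOn_add_of_forall_eq_zero {K ι : Type*} [Field K] {V : Submodule K (ι → K)}
    {I : Set ι} (hV : ∀ v ∈ V, (∀ i ∈ I, v i = 0) → v = 0) :
    Set.InjOn (fun p : (ι → K) × (ι → K) => p.1 + p.2)
      ((V : Set (ι → K)) ×ˢ {e | ∀ i ∈ I, e i = 0}) := by
  rintro ⟨v, e⟩ ⟨hv : v ∈ V, he : ∀ i ∈ I, e i = 0⟩
    ⟨v', e'⟩ ⟨hv' : v' ∈ V, he' : ∀ i ∈ I, e' i = 0⟩ (h : v + e = v' + e')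
  have hvv' : v - v' = 0 := hV _ (V.sub_mem hv hv') fun i hi => by
    simpa [he i hi, he' i hi, sub_eq_zero] using congrFun h i
  obtain rfl := sub_eq_zero.mp hvv'
  simpa using h

theorem ncard_setOf_forall_eq_zero_hammingNorm_le {ι : Type*} [Fintype ι] (I : Finset ι) (t : ℕ) :
    {e : ι → ZMod 2 | (∀ i ∈ I, e i = 0) ∧ hammingNorm e ≤ t}.ncard =
      ballCount (Fintype.card ι - #I) t := by
  classical
  rw [Set.ncard_eq_toFinset_card', Set.toFinset_ofPred, ← card_compl,
    ← card_filter_powerset_card_le]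
  refine card_nbij' (fun e => ({i | e i ≠ 0} : Finset ι)) (fun T i => if i ∈ T then 1 else 0)
    ?_ ?_ ?_ ?_
  · intro e he
    simp only [coe_filter, mem_univ, true_and, Set.mem_ofPred_eq, mem_powerset] at he ⊢
    refine ⟨fun i hi => mem_compl.mpr fun hiI => (mem_filter.mp hi).2 (he.1 i hiI), he.2⟩
  · intro T hT
    simp only [coe_filter, mem_powerset, Set.mem_ofPred_eq, mem_univ, true_and] at hT ⊢
    refine ⟨fun i hi => if_neg fun hiT => mem_compl.mp (hT.1 hiT) hi, ?_⟩
    convert hT.2 using 2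
    simp [hammingNorm]
  · intro e _
    funext i
    by_cases h : e i = 0
    · simp [h]
    · have h1 : e i = 1 := Fin.eq_one_of_ne_zero (e i) h
      simp [h1]
  · intro T _
    ext
    simp

/-- If `S ⊆ 𝔽₂^n` is an affine subspace of dimension `d`, then the Minkowski sum
`S + B(t)` has size at least `2^d · binom(n − d, ≤ t)`. -/
theorem affine_subspace_ball_sum_lower
    (n d t : ℕ) (S : Set (Fin n → ZMod 2))
    (hS : ∃ (u : Fin n → ZMod 2) (V : Submodule (ZMod 2) (Fin n → ZMod 2)),
      S = {w | ∃ v ∈ V, w = u + v} ∧ d = Module.finrank (ZMod 2) V) :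
    2 ^ d * ballCount (n - d) t ≤
      Set.ncard {w : Fin n → ZMod 2 |
        ∃ a ∈ S, ∃ b : Fin n → ZMod 2, hammingNorm b ≤ t ∧ w = a + b} := by
  obtain ⟨u, V, rfl, rfl⟩ := hS
  obtain ⟨I, hIcard, hI⟩ := V.exists_finset_card_le_finrank_forall_eq_zero
  set E : Set (Fin n → ZMod 2) := {e | (∀ i ∈ I, e i = 0) ∧ hammingNorm e ≤ t}
  have hE : ballCount (n - finrank (ZMod 2) V) t ≤ E.ncard := by
    rw [ncard_setOf_forall_eq_zero_hammingNorm_le, Fintype.card_fin]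
    exact ballCount_mono_left t (by omega)
  have hinj : Set.InjOn (fun p => u + (p.1 + p.2)) ((V : Set (Fin n → ZMod 2)) ×ˢ E) :=
    (add_right_injective u).comp_injOn <|
      (Submodule.injOn_add_of_forall_eq_zero hI).mono (Set.prod_mono le_rfl fun e he => he.1)
  calc 2 ^ finrank (ZMod 2) V * ballCount (n - finrank (ZMod 2) V) t
      ≤ (V : Set (Fin n → ZMod 2)).ncard * E.ncard := by
        rw [← Nat.card_coe_set_eq, SetLike.coe_sort_coe, natCard_eq_pow_finrank (K := ZMod 2),
          Nat.card_zmod]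
        gcongr
    _ = ((fun p => u + (p.1 + p.2)) '' ((V : Set (Fin n → ZMod 2)) ×ˢ E)).ncard := by
        rw [hinj.ncard_image, Set.ncard_prod]
    _ ≤ _ := by
        refine Set.ncard_le_ncard ?_ (Set.toFinite _)
        rintro _ ⟨⟨v, e⟩, ⟨hv, he⟩, rfl⟩
        exact ⟨u + v, ⟨v, hv, rfl⟩, e, he.2, (add_assoc u v e).symm⟩
end

section
/- Let x₁,…,x_m be sets none of which is (T,j)-heavy for a fixed prefix c₀ (i.e., each contributes at most T distinct extensions), and suppose their union is (2^{k+1}·T, j)-heavy (contributes more than 2^{k+1}·T distinct extensions). Then the sequence can be partitioned into at least 2^k disjoint consecutive groups, each of which is (T, j)-heavy. -/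
/-- The number of distinct length-`n` codeword prefixes that extend the codeword prefix
`c₀` (of length `ℓ`) and encode a message whose length-`i` prefix lies in `X`.
A set `X` is `(T, n)`-heavy for `c₀` precisely when this count exceeds `T`. -/
noncomputable def heavyCount (C : (ℕ → ZMod 2) → (ℕ → ZMod 2)) (i ℓ n : ℕ)
    (c₀ : Fin ℓ → ZMod 2) (X : Set (Fin i → ZMod 2)) : ℕ :=
  Set.ncard {w : Fin n → ZMod 2 | ∃ x : ℕ → ZMod 2,
    (∀ t : Fin n, C x (t : ℕ) = w t) ∧ (∀ t : Fin ℓ, C x (t : ℕ) = c₀ t) ∧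
      (fun t : Fin i => x (t : ℕ)) ∈ X}

lemma heavyCount_union_le (C : (ℕ → ZMod 2) → (ℕ → ZMod 2)) (i ℓ n : ℕ)
    (c₀ : Fin ℓ → ZMod 2) (X Y : Set (Fin i → ZMod 2)) :
    heavyCount C i ℓ n c₀ (X ∪ Y) ≤ heavyCount C i ℓ n c₀ X + heavyCount C i ℓ n c₀ Y := by
  unfold heavyCount
  calc Set.ncard {w : Fin n → ZMod 2 | ∃ x : ℕ → ZMod 2,
        (∀ t : Fin n, C x (t : ℕ) = w t) ∧ (∀ t : Fin ℓ, C x (t : ℕ) = c₀ t) ∧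
          (fun t : Fin i => x (t : ℕ)) ∈ X ∪ Y}
      ≤ Set.ncard ({w : Fin n → ZMod 2 | ∃ x : ℕ → ZMod 2,
        (∀ t : Fin n, C x (t : ℕ) = w t) ∧ (∀ t : Fin ℓ, C x (t : ℕ) = c₀ t) ∧
          (fun t : Fin i => x (t : ℕ)) ∈ X} ∪ {w : Fin n → ZMod 2 | ∃ x : ℕ → ZMod 2,
        (∀ t : Fin n, C x (t : ℕ) = w t) ∧ (∀ t : Fin ℓ, C x (t : ℕ) = c₀ t) ∧
          (fun t : Fin i => x (t : ℕ)) ∈ Y}) := by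
        apply Set.ncard_le_ncard _ (Set.toFinite _)
        rintro w ⟨x, h1, h2, h3⟩
        rcases h3 with h3 | h3
        · exact Or.inl ⟨x, h1, h2, h3⟩
        · exact Or.inr ⟨x, h1, h2, h3⟩
    _ ≤ _ := Set.ncard_union_le _ _

lemma heavyCount_empty (C : (ℕ → ZMod 2) → (ℕ → ZMod 2)) (i ℓ n : ℕ)
    (c₀ : Fin ℓ → ZMod 2) :
    heavyCount C i ℓ n c₀ (∅ : Set (Fin i → ZMod 2)) = 0 := by
  unfold heavyCount
  have h : {w : Fin n → ZMod 2 | ∃ x : ℕ → ZMod 2,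
      (∀ t : Fin n, C x (t : ℕ) = w t) ∧ (∀ t : Fin ℓ, C x (t : ℕ) = c₀ t) ∧
        (fun t : Fin i => x (t : ℕ)) ∈ (∅ : Set (Fin i → ZMod 2))} = ∅ := by
    ext w; simp
  rw [h, Set.ncard_empty]

/-- If none of the sets `X 0, …, X (m−1)` is `(T, n)`-heavy for `c₀` but their union is
`(2^(k+1)·T, n)`-heavy, then the sequence can be partitioned into at least `2^k`
disjoint consecutive groups, each of which is `(T, n)`-heavy. -/
theorem greedy_heavy_partition
    (C : (ℕ → ZMod 2) → (ℕ → ZMod 2)) (i ℓ n : ℕ) (c₀ : Fin ℓ → ZMod 2)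
    (T k m : ℕ) (X : Fin m → Set (Fin i → ZMod 2))
    (hlight : ∀ p, heavyCount C i ℓ n c₀ (X p) ≤ T)
    (hheavy : 2 ^ (k + 1) * T < heavyCount C i ℓ n c₀ (⋃ p, X p)) :
    ∃ q : ℕ → ℕ, Monotone q ∧ q 0 = 0 ∧ q (2 ^ k) ≤ m ∧
      ∀ s < 2 ^ k,
        T < heavyCount C i ℓ n c₀
          (⋃ p ∈ {p : Fin m | q s ≤ (p : ℕ) ∧ (p : ℕ) < q (s + 1)}, X p) := by
  set F : ℕ → ℕ → ℕ := fun a b =>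
    heavyCount C i ℓ n c₀ (⋃ p ∈ {p : Fin m | a ≤ (p : ℕ) ∧ (p : ℕ) < b}, X p) with hF
  -- splitting
  have Fsplit : ∀ a b c : ℕ, a ≤ b → b ≤ c → F a c ≤ F a b + F b c := by
    intro a b c hab hbc
    have hset : {p : Fin m | a ≤ (p : ℕ) ∧ (p : ℕ) < c}
        = {p : Fin m | a ≤ (p : ℕ) ∧ (p : ℕ) < b} ∪ {p : Fin m | b ≤ (p : ℕ) ∧ (p : ℕ) < c} := by
      ext p; simp only [Set.mem_setOf_eq, Set.mem_union]; omega
    simp only [hF]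
    rw [hset, Set.biUnion_union]
    exact heavyCount_union_le C i ℓ n c₀ _ _
  -- empty interval
  have Fzero : ∀ a b : ℕ, b ≤ a → F a b = 0 := by
    intro a b hba
    have hset : {p : Fin m | a ≤ (p : ℕ) ∧ (p : ℕ) < b} = (∅ : Set (Fin m)) := by
      ext p; simp only [Set.mem_setOf_eq, Set.mem_empty_iff_false, iff_false]; omega
    simp only [hF]
    rw [hset, Set.biUnion_empty]
    exact heavyCount_empty C i ℓ n c₀
  -- singleton interval
  have Fsing : ∀ a : ℕ, F a (a + 1) ≤ T := by
    intro a
    by_cases ha : a < m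
    · have hset : {p : Fin m | a ≤ (p : ℕ) ∧ (p : ℕ) < a + 1} = {(⟨a, ha⟩ : Fin m)} := by
        ext p
        simp only [Set.mem_setOf_eq, Set.mem_singleton_iff, Fin.ext_iff]
        omega
      simp only [hF]
      rw [hset, Set.biUnion_singleton]
      exact hlight _
    · have hset : {p : Fin m | a ≤ (p : ℕ) ∧ (p : ℕ) < a + 1} = (∅ : Set (Fin m)) := by
        ext p
        simp only [Set.mem_setOf_eq, Set.mem_empty_iff_false, iff_false]
        have := p.isLt
        omega
      simp only [hF]
      rw [hset, Set.biUnion_empty, heavyCount_empty]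
      exact Nat.zero_le _
  -- the whole union
  have Fm : 2 ^ (k + 1) * T < F 0 m := by
    have hset : {p : Fin m | 0 ≤ (p : ℕ) ∧ (p : ℕ) < m} = (Set.univ : Set (Fin m)) := by
      ext p
      simp only [Set.mem_setOf_eq, Set.mem_univ, iff_true]
      exact ⟨Nat.zero_le _, p.isLt⟩
    simp only [hF]
    rw [hset, Set.biUnion_univ]
    exact hheavy
  -- greedy sequence
  set q : ℕ → ℕ := fun s =>
    Nat.rec 0 (fun _ qs => max qs (sInf {b | b ≤ m ∧ T < F qs b})) s with hq
  have q0 : q 0 = 0 := rfl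
  have qsucc : ∀ s : ℕ, q (s + 1) = max (q s) (sInf {b | b ≤ m ∧ T < F (q s) b}) :=
    fun s => rfl
  have qmono : Monotone q := by
    apply monotone_nat_of_le_succ
    intro s
    rw [qsucc s]
    exact le_max_left _ _
  -- main invariant
  have main : ∀ s : ℕ, s ≤ 2 ^ k →
      q s ≤ m ∧ F 0 (q s) ≤ 2 * T * s ∧ ∀ t, t < s → T < F (q t) (q (t + 1)) := by
    intro s
    induction s with
    | zero =>
      intro _
      refine ⟨by rw [q0]; exact Nat.zero_le _, ?_, fun t ht => absurd ht (Nat.not_lt_zero t)⟩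
      rw [q0, Fzero 0 0 le_rfl]
      exact Nat.zero_le _
    | succ s ih =>
      intro hs1
      obtain ⟨hqm, hg, hblocks⟩ := ih (Nat.le_of_succ_le hs1)
      -- key arithmetic bound
      have hC : 2 * T * (s + 1) ≤ 2 ^ (k + 1) * T := by
        calc 2 * T * (s + 1) ≤ 2 * T * 2 ^ k := Nat.mul_le_mul_left _ hs1
          _ = 2 ^ (k + 1) * T := by ring
      -- m belongs to the candidate set
      have hTm : T < F (q s) m := by
        by_contra h
        push_neg at h
        have hA : F 0 m ≤ F 0 (q s) + F (q s) m := Fsplit 0 (q s) m (Nat.zero_le _) hqm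
        have : F 0 m ≤ 2 ^ (k + 1) * T := by
          calc F 0 m ≤ F 0 (q s) + F (q s) m := hA
            _ ≤ 2 * T * s + T := Nat.add_le_add hg h
            _ ≤ 2 * T * s + 2 * T := Nat.add_le_add_left (by omega) _
            _ = 2 * T * (s + 1) := by ring
            _ ≤ 2 ^ (k + 1) * T := hC
        omega
      have hmS : m ∈ {b | b ≤ m ∧ T < F (q s) b} := ⟨le_rfl, hTm⟩
      have hne : {b | b ≤ m ∧ T < F (q s) b}.Nonempty := ⟨m, hmS⟩
      have hbmem := Nat.sInf_mem hne
      set b := sInf {b | b ≤ m ∧ T < F (q s) b} with hb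
      obtain ⟨hbm, hbT⟩ := hbmem
      have hqsb : q s < b := by
        by_contra h
        push_neg at h
        have := Fzero (q s) b h
        omega
      have hq1 : q (s + 1) = b := by
        rw [qsucc s, ← hb]
        exact Nat.max_eq_right (le_of_lt hqsb)
      have hb1 : b - 1 ∉ {b | b ≤ m ∧ T < F (q s) b} := by
        apply Nat.notMem_of_lt_sInf
        omega
      have hFb1 : F (q s) (b - 1) ≤ T := by
        by_contra h
        push_neg at h
        exact hb1 ⟨by omega, h⟩
      have hFsing' : F (b - 1) b ≤ T := by
        have := Fsing (b - 1)
        have he : b - 1 + 1 = b := by omega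
        rwa [he] at this
      have hFqsb : F (q s) b ≤ T + T := by
        calc F (q s) b ≤ F (q s) (b - 1) + F (b - 1) b :=
              Fsplit (q s) (b - 1) b (by omega) (by omega)
          _ ≤ T + T := Nat.add_le_add hFb1 hFsing'
      refine ⟨by rw [hq1]; exact hbm, ?_, ?_⟩
      · have hA : F 0 (q (s + 1)) ≤ F 0 (q s) + F (q s) (q (s + 1)) :=
          Fsplit 0 (q s) (q (s + 1)) (Nat.zero_le _) (by rw [hq1]; exact le_of_lt hqsb)
        calc F 0 (q (s + 1)) ≤ F 0 (q s) + F (q s) (q (s + 1)) := hA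
          _ ≤ 2 * T * s + (T + T) := by rw [hq1]; exact Nat.add_le_add hg hFqsb
          _ = 2 * T * (s + 1) := by ring
      · intro t ht
        rcases Nat.lt_succ_iff_lt_or_eq.mp ht with ht' | ht'
        · exact hblocks t ht'
        · subst ht'
          rw [hq1]
          exact hbT
  refine ⟨q, qmono, q0, (main _ le_rfl).1, ?_⟩
  intro s hs
  have := (main _ le_rfl).2.2 s hs
  simpa only [hF] using this
end

section
/- For every ε < 1/17 and R < 1 − H(3ε) (H the binary entropy), there exists a linear unbounded code over 𝔽₂ with rate R resilient to BSC(ε) noise: there exist k₀, c > 0 and a decoder D such that for all messages x, all i ≥ k₀ and j ≥ i/R, the probability (over i.i.d. Bernoulli(ε) bit flips on the first j codeword bits) that D fails to recover x[:i] from the corrupted prefix is at most exp(−cj). -/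
/-- The binary entropy function `H(p) = −p log₂ p − (1−p) log₂ (1−p)`. -/
noncomputable def binEnt (p : ℝ) : ℝ :=
  -(p * Real.logb 2 p) - (1 - p) * Real.logb 2 (1 - p)

/-!
Fix a design rate `ρ` with `R < ρ < 1 - H(3ε)` and let codeword bit `n` be a parity of the first
`⌈ρ (n + 1)⌉` message bits. A counting (Gilbert–Varshamov) argument gives, for every horizon `J`,
a generator with the following distance property at every time `j₀ ≤ j ≤ J`: a message difference
whose first one sits at `t₀ < R j` has at least `3ε (j - n₀)` ones among the first `j` codeword
bits, where `n₀ ≈ t₀ / ρ` is the first codeword bit that reads `t₀`. The bad events have total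
weight `∑ j 2^{-(1 - H(3ε) - ρ)(1 - R/ρ) j}`, which is small for large `j₀`, and König's lemma
turns the finite-horizon generators into a single infinite one. If the nearest-codeword decoder
errs on `x[:i]`, the noise must then hit at least half of those ones, i.e. have weight
`≥ (3ε/2)(j - n₀)` on a suffix of length `j - n₀ ≥ (1 - R/ρ) j`; by a Chernoff bound this has
probability `exp(-Ω(j))`, and a union bound over the at most `j` first error positions remains
exponentially small.
-/

open Finset

theorem sum_univ_zmod_two {M : Type*} [AddCommMonoid M] (g : ZMod 2 → M) : ∑ b, g b = g 0 + g 1 :=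
  Fin.sum_univ_two g

theorem card_filter_fin_eq_card_filter_range (J : ℕ) (p : ℕ → Prop) [DecidablePred p] :
    #{n : Fin J | p n} = #{n ∈ range J | p n} := by
  rw [← card_map Fin.valEmbedding, map_filter', Fin.map_valEmbedding_univ, Nat.Iio_eq_range]
  congr 1
  ext n
  simp only [mem_filter, mem_range, and_congr_right_iff]
  intro hn
  exact ⟨fun ⟨a, ha, e⟩ => e ▸ ha, fun h => ⟨⟨n, hn⟩, h, rfl⟩⟩

theorem card_filter_fin_le_val (j a : ℕ) : #{s : Fin j | a ≤ (s : ℕ)} = j - a := by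
  rw [card_filter_fin_eq_card_filter_range, ← Nat.card_Ico]
  congr 1
  ext s
  simp [and_comm]

theorem card_filter_fin_Ico {J j : ℕ} (k : ℕ) (hjJ : j ≤ J) :
    #{n : Fin J | k ≤ (n : ℕ) ∧ (n : ℕ) < j} = j - k := by
  rw [card_filter_fin_eq_card_filter_range J (fun m => k ≤ m ∧ m < j), ← Nat.card_Ico]
  congr 1
  ext m
  simp only [mem_filter, mem_range, mem_Ico]
  exact ⟨fun h => h.2, fun h => ⟨h.2.trans_le hjJ, h⟩⟩

theorem exists_mem_powerset_eq_indicator {z : ℕ → ZMod 2} {s : Finset ℕ} (h : z.support ⊆ s) :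
    ∃ T ∈ s.powerset, z = (T : Set ℕ).indicator 1 := by
  refine ⟨{x ∈ s | z x ≠ 0}, mem_powerset.mpr (filter_subset _ _), funext fun x => ?_⟩
  by_cases hx : z x = 0
  · simp [hx]
  · have : ∀ a : ZMod 2, a ≠ 0 → a = 1 := by decide
    rw [Set.indicator_of_mem (mem_coe.mpr (mem_filter.mpr ⟨mem_coe.mp (h hx), hx⟩)), this _ hx,
      Pi.one_apply]

theorem sum_prod_mul_indicator_le {ι κ : Type*} [Fintype ι] [DecidableEq ι] [Fintype κ]
    (f : ι → κ → ℝ) (hf : ∀ n k, 0 ≤ f n k) (P : ι → κ → Prop) [∀ n, DecidablePred (P n)]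
    {b a : ℝ} (hb : 0 < b) (A : Set (ι → κ))
    (hA : ∀ w ∈ A, 1 ≤ b ^ ((#{n | P n (w n)} : ℝ) - a)) :
    ∑ w, (∏ n, f n (w n)) * A.indicator 1 w ≤
      b ^ (-a) * ∏ n, ∑ k, f n k * if P n k then b else 1 := by
  have hpow : ∀ w : ι → κ, b ^ ((#{n | P n (w n)} : ℝ) - a) =
      b ^ (-a) * ∏ n, if P n (w n) then b else 1 := by
    intro w
    rw [sub_eq_neg_add, Real.rpow_add hb, Real.rpow_natCast, prod_ite, prod_const_one, mul_one,
      prod_const]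
  rw [Fintype.prod_sum, mul_sum]
  refine sum_le_sum fun w _ => ?_
  rw [prod_mul_distrib, mul_left_comm, ← hpow]
  refine mul_le_mul_of_nonneg_left ?_ (prod_nonneg fun n _ => hf n _)
  by_cases hw : w ∈ A
  · simpa [hw] using hA w hw
  · simpa [hw] using (Real.rpow_pos_of_pos hb _).le

theorem two_mul_sum_comp_eq_card_mul {V : Type*} [AddCommGroup V] [Fintype V] (φ : V → ZMod 2)
    (d : V) (hd : ∀ v, φ (v + d) = φ v + 1) (g : ZMod 2 → ℝ) :
    2 * ∑ v, g (φ v) = Fintype.card V * (g 0 + g 1) := by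
  have key : ∀ v, g (φ v) + g (φ (v + d)) = g 0 + g 1 := by
    intro v
    rw [hd]
    generalize φ v = b
    fin_cases b
    · rfl
    · exact add_comm _ _
  calc 2 * ∑ v, g (φ v) = ∑ v, g (φ v) + ∑ v, g (φ (v + d)) := by
        rw [two_mul, ← Equiv.sum_comp (Equiv.addRight d) (fun v => g (φ v))]
        rfl
    _ = _ := by simp [← sum_add_distrib, key, mul_add]

theorem hammingNorm_le_two_mul_card {ι β : Type*} [Fintype ι] [DecidableEq β] [Zero β]
    (u η : ι → β) (h : hammingDist u η ≤ hammingNorm η) :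
    hammingNorm u ≤ 2 * #{n | u n ≠ 0 ∧ η n ≠ 0} := by
  classical
  have split : ∀ p q : ι → Prop, [DecidablePred p] → [DecidablePred q] →
      #{n | p n} = #{n | p n ∧ q n} + #{n | p n ∧ ¬ q n} := by
    intro p q _ _
    rw [← filter_filter, ← filter_filter, card_filter_add_card_filter_not]
  have hdist : #{n | u n ≠ 0 ∧ ¬ η n ≠ 0} + #{n | η n ≠ 0 ∧ ¬ u n ≠ 0} ≤ hammingDist u η := by
    rw [← card_union_of_disjoint (disjoint_filter.mpr fun n _ h₁ h₂ => h₂.2 h₁.1)]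
    refine card_le_card fun n => ?_
    simp only [mem_union, mem_filter, mem_univ, true_and]
    rintro (⟨hu, hη⟩ | ⟨hη, hu⟩) <;> simp_all [eq_comm]
  have hu := split (u · ≠ 0) (η · ≠ 0)
  have hη := split (η · ≠ 0) (u · ≠ 0)
  simp only [hammingNorm, hammingDist] at h hdist ⊢
  simp only [and_comm (a := η _ ≠ 0) (b := u _ ≠ 0)] at hη
  omega

theorem binEnt_eq (p : ℝ) : binEnt p = Real.binEntropy p / Real.log 2 := by
  simp only [binEnt, Real.binEntropy, Real.logb, Real.log_inv]
  ring

theorem binEnt_pos {p : ℝ} (h0 : 0 < p) (h1 : p < 1) : 0 < binEnt p := by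
  rw [binEnt_eq]
  exact div_pos (Real.binEntropy_pos h0 h1) (Real.log_pos one_lt_two)

theorem rpow_neg_mul_one_add_div_two_eq_rpow_binEnt {δ : ℝ} (h0 : 0 < δ) (h1 : δ < 1) :
    (δ / (1 - δ)) ^ (-δ) * ((1 + δ / (1 - δ)) / 2) = 2 ^ (binEnt δ - 1) := by
  have h1δ : 0 < 1 - δ := by linarith
  have hsum : 1 + δ / (1 - δ) = (1 - δ)⁻¹ := by field_simp; ring
  rw [hsum, Real.rpow_def_of_pos (div_pos h0 h1δ), Real.rpow_def_of_pos two_pos, binEnt_eq,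
    Real.log_div h0.ne' h1δ.ne', ← Real.exp_log (by positivity : (0:ℝ) < (1 - δ)⁻¹ / 2),
    ← Real.exp_add, Real.log_div (by positivity) two_ne_zero, Real.binEntropy]
  congr 1
  field_simp [(Real.log_pos one_lt_two).ne']
  simp only [one_div, Real.log_inv]
  ring

-- König's lemma, through compactness of `ι → κ` for the discrete topology on `κ`.
theorem exists_forall_mem_of_forall_exists {ι κ : Type*} [Finite κ] {P : ℕ → Set (ι → κ)}
    (hP : ∀ j, ∃ s : Finset ι, ∀ G G', (∀ a ∈ s, G a = G' a) → G ∈ P j → G' ∈ P j)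
    (h : ∀ J, ∃ G, ∀ j ≤ J, G ∈ P j) : ∃ G, ∀ j, G ∈ P j := by
  let _ : TopologicalSpace κ := ⊥
  have _ : DiscreteTopology κ := ⟨rfl⟩
  have hclosed : ∀ j, IsClosed (P j) := by
    intro j
    obtain ⟨s, hs⟩ := hP j
    let restrict : (ι → κ) → (s → κ) := fun G a => G a
    have hpre : restrict ⁻¹' (restrict '' P j) = P j := by
      refine (Set.subset_preimage_image _ _).antisymm' ?_
      rintro G' ⟨G, hG, hGG'⟩
      exact hs G G' (fun a ha => congrFun hGG' ⟨a, ha⟩) hG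
    rw [← hpre]
    exact (isClosed_discrete _).preimage (continuous_pi fun a => continuous_apply _)
  have hK : ∀ J, IsClosed (⋂ j ≤ J, P j) := fun J => isClosed_biInter fun j _ => hclosed j
  obtain ⟨G, hG⟩ := IsCompact.nonempty_iInter_of_sequence_nonempty_isCompact_isClosed
    (fun J => ⋂ j ≤ J, P j)
    (fun J => Set.biInter_mono (fun j hj => Nat.le_succ_of_le hj) fun _ _ => le_rfl)
    (fun J => (h J).imp fun G hG => Set.mem_iInter₂.mpr hG) (hK 0).isCompact hK
  exact ⟨G, fun j => Set.mem_iInter₂.mp (Set.mem_iInter.mp hG j) j le_rfl⟩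

theorem Summable.exists_sum_Icc_lt_one {f : ℕ → ℝ} (hf : Summable f) :
    ∃ j₀, ∀ J, ∑ j ∈ Icc j₀ J, f j < 1 := by
  obtain ⟨s, hs⟩ := hf.vanishing (Iio_mem_nhds one_pos)
  refine ⟨s.sup id + 1, fun J => hs _ (disjoint_left.mpr fun j hj hjs => ?_)⟩
  have h₁ : j ≤ s.sup id := le_sup (f := id) hjs
  have h₂ : s.sup id + 1 ≤ j := (mem_Icc.mp hj).1
  omega

theorem exists_nat_mul_exp_le {κ : ℝ} (hκ : 0 < κ) :
    ∃ N : ℕ, ∀ j ≥ N, (j : ℝ) * Real.exp (-κ * j) ≤ Real.exp (-(κ / 2) * j) := by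
  refine ⟨⌈8 / κ ^ 2⌉₊, fun j hj => ?_⟩
  have hj' : 8 / κ ^ 2 ≤ j := Nat.ceil_le.mp hj
  have hquad := Real.quadratic_le_exp_of_nonneg (by positivity : 0 ≤ κ / 2 * j)
  have hlin : (j : ℝ) ≤ Real.exp (κ / 2 * j) := by
    rw [div_le_iff₀ (by positivity)] at hj'
    nlinarith [j.cast_nonneg (α := ℝ)]
  calc (j : ℝ) * Real.exp (-κ * j)
      ≤ Real.exp (κ / 2 * j) * Real.exp (-κ * j) :=
        mul_le_mul_of_nonneg_right hlin (Real.exp_pos _).le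
    _ = Real.exp (-(κ / 2) * j) := by rw [← Real.exp_add]; ring_nf

noncomputable section

namespace UnboundedCode

def bscProb {ι : Type*} [Fintype ι] [DecidableEq ι] (ε : ℝ) (A : Set (ι → ZMod 2)) : ℝ :=
  ∑ η, (∏ t, if η t = 1 then ε else 1 - ε) * A.indicator (fun _ => 1) η

section BSC

variable {ι : Type*} [Fintype ι] [DecidableEq ι] {ε : ℝ}

theorem bscProb_le_sum (hε0 : 0 ≤ ε) (hε1 : ε ≤ 1) {α : Type*} {A : Set (ι → ZMod 2)}
    (s : Finset α) (B : α → Set (ι → ZMod 2)) (h : A ⊆ ⋃ a ∈ s, B a) :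
    bscProb ε A ≤ ∑ a ∈ s, bscProb ε (B a) := by
  unfold bscProb
  rw [sum_comm (s := s)]
  refine sum_le_sum fun η _ => ?_
  rw [← mul_sum]
  refine mul_le_mul_of_nonneg_left ?_ (prod_nonneg fun t _ => by split_ifs <;> linarith)
  have hnonneg : ∀ b ∈ s, 0 ≤ (B b).indicator (fun _ => (1 : ℝ)) η :=
    fun b _ => Set.indicator_nonneg (fun _ _ => zero_le_one) η
  by_cases hA : η ∈ A
  · obtain ⟨a, ha, hη⟩ := Set.mem_iUnion₂.mp (h hA)
    calc A.indicator (fun _ => (1 : ℝ)) η = (B a).indicator (fun _ => 1) η := by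
          rw [Set.indicator_of_mem hA, Set.indicator_of_mem hη]
      _ ≤ _ := single_le_sum hnonneg ha
  · rw [Set.indicator_of_notMem hA]
    exact sum_nonneg hnonneg

theorem bscProb_le_exp (hε0 : 0 ≤ ε) (hε1 : ε ≤ 1) (p : ι → Prop) [DecidablePred p] (a : ℝ) :
    bscProb ε {η | a ≤ #{t | p t ∧ η t ≠ 0}} ≤ Real.exp (ε * #{t | p t} - a * Real.log 2) := by
  have hmoment := sum_prod_mul_indicator_le (fun _ (b : ZMod 2) => if b = 1 then ε else 1 - ε)
    (fun _ b => by split_ifs <;> linarith) (fun t b => p t ∧ b ≠ 0) two_pos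
    {η | a ≤ #{t | p t ∧ η t ≠ 0}} fun η hη => Real.one_le_rpow one_le_two (sub_nonneg.mpr hη)
  have hfactor : ∀ t, ∑ b : ZMod 2, (if b = 1 then ε else 1 - ε) * (if p t ∧ b ≠ 0 then 2 else 1)
      = if p t then 1 + ε else 1 := by
    intro t
    rw [sum_univ_zmod_two]
    split_ifs <;> simp_all; ring
  have hprod : ∏ t, (if p t then 1 + ε else 1) = (1 + ε) ^ #{t | p t} := by
    rw [prod_ite, prod_const, prod_const_one, mul_one]
  simp only [hfactor, hprod] at hmoment
  refine hmoment.trans ?_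
  rw [Real.rpow_def_of_pos two_pos, sub_eq_neg_add, Real.exp_add, mul_comm (Real.log 2), ← neg_mul]
  gcongr
  rw [mul_comm, Real.exp_nat_mul, add_comm]
  exact pow_le_pow_left₀ (by linarith) (Real.add_one_le_exp ε) _

end BSC

variable {ρ : ℝ}

-- Codeword bit `n` reads the message bits `t < scope ρ n`; bit `t` is first read by `firstRow ρ t`.
def scope (ρ : ℝ) (n : ℕ) : ℕ := ⌈ρ * (n + 1)⌉₊

def firstRow (ρ : ℝ) (t : ℕ) : ℕ := ⌊t / ρ⌋₊

def window (ρ : ℝ) (j : ℕ) : ℕ := ⌈ρ * j⌉₊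

theorem lt_scope_iff (hρ : 0 < ρ) {t n : ℕ} : t < scope ρ n ↔ firstRow ρ t ≤ n := by
  rw [scope, firstRow, Nat.lt_ceil, ← Nat.lt_add_one_iff, Nat.floor_lt (by positivity),
    div_lt_iff₀ hρ, mul_comm]
  push_cast
  rfl

theorem scope_le_window (hρ : 0 ≤ ρ) {n j : ℕ} (h : n < j) : scope ρ n ≤ window ρ j :=
  Nat.ceil_le_ceil <| mul_le_mul_of_nonneg_left (by exact_mod_cast h) hρ

theorem window_lt (hρ : 0 ≤ ρ) (j : ℕ) : (window ρ j : ℝ) < ρ * j + 1 :=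
  Nat.ceil_lt_add_one (by positivity)

theorem mul_firstRow_le (hρ : 0 < ρ) (t : ℕ) : ρ * firstRow ρ t ≤ t := by
  rw [← le_div_iff₀' hρ]
  exact Nat.floor_le (by positivity)

theorem sub_firstRow_ge {R : ℝ} (hρ : 0 < ρ) {t j : ℕ} (ht : (t : ℝ) < R * j) :
    (1 - R / ρ) * j ≤ j - firstRow ρ t := by
  have := mul_firstRow_le hρ t
  rw [sub_mul, one_mul, div_mul_eq_mul_div, sub_le_sub_iff_left, le_div_iff₀ hρ]
  linarith

theorem firstRow_lt (hρ : 0 < ρ) {t j : ℕ} (ht : (t : ℝ) < ρ * j) : firstRow ρ t < j := by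
  have := mul_firstRow_le hρ t
  exact_mod_cast lt_of_mul_lt_mul_left (this.trans_lt ht) hρ.le

def encode (ρ : ℝ) (G : ℕ × ℕ → ZMod 2) : (ℕ → ZMod 2) →+ (ℕ → ZMod 2) where
  toFun x n := ∑ t ∈ range (scope ρ n), G (n, t) * x t
  map_zero' := by ext; simp
  map_add' x y := by ext n; simp [mul_add, sum_add_distrib]

theorem encode_apply (G : ℕ × ℕ → ZMod 2) (x : ℕ → ZMod 2) (n : ℕ) :
    encode ρ G x n = ∑ t ∈ range (scope ρ n), G (n, t) * x t := rfl

theorem encode_apply_congr {G G' : ℕ × ℕ → ZMod 2} {x x' : ℕ → ZMod 2} {n : ℕ}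
    (h : ∀ t < scope ρ n, G (n, t) * x t = G' (n, t) * x' t) :
    encode ρ G x n = encode ρ G' x' n :=
  sum_congr rfl fun t ht => h t (mem_range.mp ht)

theorem encode_apply_eq_zero (hρ : 0 < ρ) (G : ℕ × ℕ → ZMod 2) {z : ℕ → ZMod 2} {t₀ n : ℕ}
    (hz : ∀ s < t₀, z s = 0) (hn : n < firstRow ρ t₀) : encode ρ G z n = 0 := by
  have hscope : scope ρ n ≤ t₀ := not_lt.mp fun h => hn.not_ge ((lt_scope_iff hρ).mp h)
  rw [encode_apply]
  exact sum_eq_zero fun t ht => by rw [hz t ((mem_range.mp ht).trans_le hscope), mul_zero]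

def decode (ρ : ℝ) (G : ℕ × ℕ → ZMod 2) (j : ℕ) (y : Fin j → ZMod 2) :
    ℕ → ZMod 2 :=
  Function.argminOn (fun g => hammingDist (fun n : Fin j => encode ρ G g n) y)
    {g | g.support ⊆ Set.Iio (window ρ j)} ⟨0, by simp⟩

theorem decode_spec (G : ℕ × ℕ → ZMod 2) {j : ℕ} (y : Fin j → ZMod 2) :
    (decode ρ G j y).support ⊆ Set.Iio (window ρ j) ∧
      ∀ g : ℕ → ZMod 2, g.support ⊆ Set.Iio (window ρ j) →
        hammingDist (fun n : Fin j => encode ρ G (decode ρ G j y) n) y ≤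
          hammingDist (fun n : Fin j => encode ρ G g n) y :=
  ⟨Function.argminOn_mem _ {g : ℕ → ZMod 2 | g.support ⊆ Set.Iio (window ρ j)} _,
    fun _ hg =>
      Function.argminOn_le (fun g => hammingDist (fun n : Fin j => encode ρ G g n) y) _ hg⟩

theorem hammingDist_encode_decode_sub_le (hρ : 0 ≤ ρ) (G : ℕ × ℕ → ZMod 2) {j : ℕ}
    (x : ℕ → ZMod 2) (η : Fin j → ZMod 2) :
    hammingDist (fun n : Fin j => encode ρ G
        (decode ρ G j (fun s => encode ρ G x s + η s) - (Set.Iio (window ρ j)).indicator x) n)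
      η ≤ hammingNorm η := by
  set c : (ℕ → ZMod 2) → Fin j → ZMod 2 := fun g n => encode ρ G g n
  set x' := (Set.Iio (window ρ j)).indicator x with hx'_def
  set D := decode ρ G j (c x + η)
  have hx' : c x' = c x := funext fun n => encode_apply_congr fun t ht => by
    rw [hx'_def, Set.indicator_of_mem (Set.mem_Iio.mpr (ht.trans_le (scope_le_window hρ n.2)))]
  have hmin : hammingDist (c D) (c x + η) ≤ hammingDist (c x') (c x + η) :=
    (decode_spec (ρ := ρ) G (c x + η)).2 x' Set.support_indicator_subset
  have hcancel : ∀ u : Fin j → ZMod 2, hammingDist (c x + u) (c x + η) = hammingDist u η :=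
    fun u => hammingDist_comp (fun n => (c x n + ·)) fun n => add_right_injective _
  have hD : c D = c x + c (D - x') := by
    rw [← hx']
    ext n
    simp only [c, map_sub, Pi.add_apply, Pi.sub_apply, add_sub_cancel]
  rwa [hD, hcancel, hx', ← add_zero (c x), add_assoc, zero_add, hcancel,
    hammingDist_zero_left] at hmin

-- The codeword bits `n < firstRow ρ t₀` cannot see a difference `z` that starts at `t₀`.
def IsGoodAt (δ R ρ : ℝ) (G : ℕ × ℕ → ZMod 2) (j : ℕ) : Prop :=
  ∀ t₀ < ⌈R * j⌉₊, ∀ z : ℕ → ZMod 2, z t₀ = 1 → z.support ⊆ Set.Ico t₀ (window ρ j) →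
    δ * (j - firstRow ρ t₀) ≤ hammingNorm (fun n : Fin j => encode ρ G z n)

theorem exists_noise_weight_ge_of_decode_ne {δ R : ℝ} (hρ : 0 < ρ) (hRρ : R ≤ ρ)
    {G : ℕ × ℕ → ZMod 2} {j : ℕ} (hG : IsGoodAt δ R ρ G j) (x : ℕ → ZMod 2)
    (η : Fin j → ZMod 2) {i t : ℕ} (hi : (i : ℝ) ≤ R * j) (ht : t < i)
    (hne : decode ρ G j (fun s => encode ρ G x s + η s) t ≠ x t) :
    ∃ t₀ < i, δ * (j - firstRow ρ t₀) ≤ 2 * #{s : Fin j | firstRow ρ t₀ ≤ s ∧ η s ≠ 0} := by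
  set D := decode ρ G j (fun s => encode ρ G x s + η s)
  set z := D - (Set.Iio (window ρ j)).indicator x with hz_def
  have hiM : i ≤ window ρ j := by
    have : (i : ℝ) ≤ window ρ j :=
      hi.trans <| (mul_le_mul_of_nonneg_right hRρ j.cast_nonneg).trans (Nat.le_ceil _)
    exact_mod_cast this
  have hzt : z t ≠ 0 := by
    rwa [hz_def, Pi.sub_apply, Set.indicator_of_mem (Set.mem_Iio.mpr (ht.trans_le hiM)),
      sub_ne_zero]
  have hz : ∃ s, z s ≠ 0 := ⟨t, hzt⟩
  set t₀ := Nat.find hz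
  have ht₀i : t₀ < i := (Nat.find_min' hz hzt).trans_lt ht
  have hbelow : ∀ s < t₀, z s = 0 := fun s hs => not_not.mp (Nat.find_min hz hs)
  have hsupp : z.support ⊆ Set.Ico t₀ (window ρ j) := by
    intro s hs
    refine ⟨not_lt.mp fun h => hs (hbelow s h), not_le.mp fun h => hs ?_⟩
    have hD : D.support ⊆ Set.Iio (window ρ j) := (decode_spec G _).1
    rw [hz_def, Pi.sub_apply, Function.notMem_support.mp fun h' => (hD h').not_ge h,
      Set.indicator_of_notMem (fun h' => (Set.mem_Iio.mp h').not_ge h), sub_zero]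
  have hzt₀ : z t₀ = 1 := by
    have : ∀ a : ZMod 2, a ≠ 0 → a = 1 := by decide
    exact this _ (Nat.find_spec hz)
  have hgood := hG t₀ (Nat.lt_ceil.mpr ((Nat.cast_lt.mpr ht₀i).trans_le hi)) z hzt₀ hsupp
  have hweight := hammingNorm_le_two_mul_card _ _ (hammingDist_encode_decode_sub_le hρ.le G x η)
  have hoverlap : #{n : Fin j | encode ρ G z n ≠ 0 ∧ η n ≠ 0} ≤
      #{s : Fin j | firstRow ρ t₀ ≤ s ∧ η s ≠ 0} :=
    card_le_card fun n hn => by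
      rw [mem_filter] at hn ⊢
      exact ⟨hn.1, not_lt.mp fun h => hn.2.1 (encode_apply_eq_zero hρ G hbelow h), hn.2.2⟩
  refine ⟨t₀, ht₀i, hgood.trans ?_⟩
  exact_mod_cast hweight.trans (Nat.mul_le_mul_left 2 hoverlap)

theorem bscProb_decode_ne_le {ε R : ℝ} (hε0 : 0 ≤ ε) (hε1 : ε ≤ 1) (hρ : 0 < ρ) (hRρ : R ≤ ρ)
    {G : ℕ × ℕ → ZMod 2} {j : ℕ} (hG : IsGoodAt (3 * ε) R ρ G j) (x : ℕ → ZMod 2) {i : ℕ}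
    (hi : (i : ℝ) ≤ R * j) :
    bscProb ε {η : Fin j → ZMod 2 | ∃ t < i, decode ρ G j (fun s => encode ρ G x s + η s) t ≠ x t}
      ≤ i * Real.exp (-(ε * (3 / 2 * Real.log 2 - 1) * (1 - R / ρ)) * j) := by
  let heavy (t₀ : ℕ) : Set (Fin j → ZMod 2) :=
    {η | 3 * ε * (j - firstRow ρ t₀) / 2 ≤ #{s : Fin j | firstRow ρ t₀ ≤ (s : ℕ) ∧ η s ≠ 0}}
  have hcover : {η : Fin j → ZMod 2 | ∃ t < i,
      decode ρ G j (fun s => encode ρ G x s + η s) t ≠ x t} ⊆ ⋃ t₀ ∈ range i, heavy t₀ := by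
    rintro η ⟨t, ht, hne⟩
    obtain ⟨t₀, ht₀, hη⟩ := exists_noise_weight_ge_of_decode_ne hρ hRρ hG x η hi ht hne
    exact Set.mem_biUnion (mem_range.mpr ht₀) (by simp only [heavy, Set.mem_ofPred_eq]; linarith)
  have hlog2 : 2 / 3 < Real.log 2 := by linarith [Real.log_two_gt_d9]
  have hheavy : ∀ t₀ ∈ range i, bscProb ε (heavy t₀) ≤
      Real.exp (-(ε * (3 / 2 * Real.log 2 - 1) * (1 - R / ρ)) * j) := by
    intro t₀ ht₀
    have ht₀R : (t₀ : ℝ) < R * j := (Nat.cast_lt.mpr (mem_range.mp ht₀)).trans_le hi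
    have hfirst : firstRow ρ t₀ ≤ j :=
      (firstRow_lt hρ (ht₀R.trans_le (mul_le_mul_of_nonneg_right hRρ j.cast_nonneg))).le
    refine (bscProb_le_exp hε0 hε1 _ _).trans (Real.exp_le_exp.mpr ?_)
    rw [card_filter_fin_le_val, Nat.cast_sub hfirst]
    have hc : 0 ≤ ε * (3 / 2 * Real.log 2 - 1) := mul_nonneg hε0 (by linarith)
    have := mul_le_mul_of_nonneg_left (sub_firstRow_ge hρ ht₀R) hc
    linarith
  refine (bscProb_le_sum hε0 hε1 _ heavy hcover).trans ?_
  simpa using sum_le_card_nsmul _ _ _ hheavy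

def gapExponent (δ R ρ : ℝ) : ℝ := (1 - binEnt δ - ρ) * (1 - R / ρ)

def ofRows {J W : ℕ} (w : Fin J → Fin W → ZMod 2) : ℕ × ℕ → ZMod 2 :=
  fun p => if h : p.1 < J ∧ p.2 < W then w ⟨p.1, h.1⟩ ⟨p.2, h.2⟩ else 0

def rowBit (ρ : ℝ) (z : ℕ → ZMod 2) (n : ℕ) {W : ℕ} (row : Fin W → ZMod 2) : ZMod 2 :=
  ∑ t ∈ range (scope ρ n), (if h : t < W then row ⟨t, h⟩ else 0) * z t

theorem encode_ofRows {J W : ℕ} (w : Fin J → Fin W → ZMod 2) (z : ℕ → ZMod 2) (n : Fin J) :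
    encode ρ (ofRows w) z n = rowBit ρ z n (w n) := by
  rw [encode_apply, rowBit]
  refine sum_congr rfl fun t _ => ?_
  by_cases ht : t < W <;> simp [ofRows, ht]

theorem rowBit_add_single {z : ℕ → ZMod 2} {n W t₀ : ℕ} (ht₀ : t₀ < scope ρ n) (hW : t₀ < W)
    (row : Fin W → ZMod 2) :
    rowBit ρ z n (row + Pi.single ⟨t₀, hW⟩ 1) = rowBit ρ z n row + z t₀ := by
  have hsingle : rowBit ρ z n (Pi.single ⟨t₀, hW⟩ 1) = z t₀ := by
    rw [rowBit, sum_eq_single_of_mem t₀ (mem_range.mpr ht₀)]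
    · simp [hW]
    · intro t _ ht
      by_cases htW : t < W
      · simp [htW, Fin.ext_iff, ht]
      · simp [htW]
  rw [← hsingle, rowBit, rowBit, rowBit, ← sum_add_distrib]
  refine sum_congr rfl fun t _ => ?_
  by_cases htW : t < W <;> simp [htW, add_mul]

theorem sum_ite_rowBit_eq (hρ : 0 < ρ) {z : ℕ → ZMod 2} {n W t₀ : ℕ} (hn : firstRow ρ t₀ ≤ n)
    (hW : scope ρ n ≤ W) (hz : z t₀ = 1) (r : ℝ) :
    ∑ row : Fin W → ZMod 2, (if rowBit ρ z n row = 1 then r else 1) = 2 ^ W * ((1 + r) / 2) := by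
  have ht₀ : t₀ < scope ρ n := (lt_scope_iff hρ).mpr hn
  have h2 := two_mul_sum_comp_eq_card_mul (rowBit ρ z n) (Pi.single ⟨t₀, ht₀.trans_le hW⟩ 1)
    (fun row => by rw [rowBit_add_single ht₀, hz]) (fun b => if b = 1 then r else 1)
  simp only [Fintype.card_pi, Fintype.card_fin, prod_const, card_univ, ZMod.card] at h2
  norm_num at h2
  linarith

theorem card_rowBit_le_hammingNorm {J W j : ℕ} (k : ℕ) (w : Fin J → Fin W → ZMod 2)
    (z : ℕ → ZMod 2) :
    #{n : Fin J | k ≤ (n : ℕ) ∧ (n : ℕ) < j ∧ rowBit ρ z n (w n) = 1} ≤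
      hammingNorm (fun n : Fin j => encode ρ (ofRows w) z n) := by
  simp only [← encode_ofRows]
  rw [card_filter_fin_eq_card_filter_range J (fun m => k ≤ m ∧ m < j ∧ encode ρ (ofRows w) z m = 1),
    hammingNorm, card_filter_fin_eq_card_filter_range j (fun m => encode ρ (ofRows w) z m ≠ 0)]
  refine card_le_card fun m hm => ?_
  simp only [mem_filter, mem_range] at hm ⊢
  exact ⟨hm.2.2.1, by simp [hm.2.2.2]⟩

-- For `n ≥ firstRow ρ t₀` the bit `rowBit ρ z n` is a nonzero linear form in row `n`, so these
-- bits are independent fair coins; this is their lower-tail Chernoff bound at `r = δ / (1 - δ)`.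
theorem card_lowWeight_le (hρ : 0 < ρ) {δ : ℝ} (hδ0 : 0 < δ) (hδ : δ ≤ 1 / 2) {J W j t₀ : ℕ}
    (hjJ : j ≤ J) (hW : ∀ n < J, scope ρ n ≤ W) (hj : firstRow ρ t₀ ≤ j) {z : ℕ → ZMod 2}
    (hz : z t₀ = 1) :
    (#{w : Fin J → Fin W → ZMod 2 |
        (hammingNorm (fun n : Fin j => encode ρ (ofRows w) z n) : ℝ) < δ * (j - firstRow ρ t₀)} : ℝ)
      ≤ 2 ^ (W * J) * 2 ^ ((binEnt δ - 1) * (j - firstRow ρ t₀)) := by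
  set k := firstRow ρ t₀
  set r := δ / (1 - δ)
  have hr0 : 0 < r := div_pos hδ0 (by linarith)
  have hr1 : r ≤ 1 := (div_le_one (by linarith)).mpr (by linarith)
  let P : Fin J → (Fin W → ZMod 2) → Prop := fun n row => k ≤ n ∧ (n : ℕ) < j ∧ rowBit ρ z n row = 1
  have hmoment := sum_prod_mul_indicator_le (fun _ _ => (1 : ℝ)) (fun _ _ => zero_le_one) P hr0
    (a := δ * (j - k))
    {w | (hammingNorm (fun n : Fin j => encode ρ (ofRows w) z n) : ℝ) < δ * (j - k)}
    fun w hw => Real.one_le_rpow_of_pos_of_le_one_of_nonpos hr0 hr1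
      (by linarith [(Nat.cast_le (α := ℝ)).mpr (card_rowBit_le_hammingNorm (ρ := ρ) (j := j) k w z),
        Set.mem_ofPred.mp hw])
  have hrow : ∀ n : Fin J, ∑ row : Fin W → ZMod 2, (if P n row then r else 1) =
      2 ^ W * (if k ≤ n ∧ (n : ℕ) < j then (1 + r) / 2 else 1) := by
    intro n
    by_cases hn : k ≤ n ∧ (n : ℕ) < j
    · simp only [P, hn, true_and, if_true]
      exact sum_ite_rowBit_eq hρ hn.1 (hW n n.2) hz r
    · rw [sum_congr rfl fun row _ => by rw [if_neg fun h => hn ⟨h.1, h.2.1⟩]]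
      simp [hn]
  simp only [prod_const_one, one_mul, hrow, prod_mul_distrib, prod_const, card_univ,
    Fintype.card_fin, prod_ite, mul_one, card_filter_fin_Ico k hjJ, Set.indicator_apply,
    Pi.one_apply, sum_boole, Set.mem_ofPred_eq] at hmoment
  refine hmoment.trans (le_of_eq ?_)
  have hent : r ^ (-δ) * ((1 + r) / 2) = 2 ^ (binEnt δ - 1) :=
    rpow_neg_mul_one_add_div_two_eq_rpow_binEnt hδ0 (by linarith)
  rw [← Nat.cast_sub hj, neg_mul_eq_neg_mul, Real.rpow_mul hr0.le, Real.rpow_natCast,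
    Real.rpow_mul two_pos.le, Real.rpow_natCast, ← hent, ← pow_mul, mul_pow]
  ring

theorem two_pow_window_sub_mul_le (hρ : 0 < ρ) {δ R : ℝ} (hRρ : R ≤ ρ) (hβ : ρ ≤ 1 - binEnt δ)
    {j t₀ : ℕ} (ht₀ : (t₀ : ℝ) < R * j) :
    (2 : ℝ) ^ (window ρ j - t₀) * 2 ^ ((binEnt δ - 1) * (j - firstRow ρ t₀)) ≤
      2 * 2 ^ (-(gapExponent δ R ρ * j)) := by
  have ht₀M : t₀ ≤ window ρ j := by
    have : (t₀ : ℝ) ≤ window ρ j :=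
      ht₀.le.trans <| (mul_le_mul_of_nonneg_right hRρ j.cast_nonneg).trans (Nat.le_ceil _)
    exact_mod_cast this
  have hM := window_lt hρ.le j
  have hk := mul_firstRow_le hρ t₀
  have hL := mul_le_mul_of_nonneg_left (sub_firstRow_ge hρ ht₀) (sub_nonneg.mpr hβ)
  rw [← Real.rpow_natCast, ← Real.rpow_add two_pos]
  nth_rw 2 [← Real.rpow_one 2]
  rw [← Real.rpow_add two_pos]
  refine Real.rpow_le_rpow_of_exponent_le one_le_two ?_
  push_cast [ht₀M]
  rw [gapExponent]
  nlinarith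

open scoped Classical in
theorem card_exists_lowWeight_le (hρ : 0 < ρ) {δ R : ℝ} (hδ0 : 0 < δ) (hδ : δ ≤ 1 / 2)
    (hRρ : R ≤ ρ) (hβ : ρ ≤ 1 - binEnt δ) {J W j t₀ : ℕ} (hjJ : j ≤ J)
    (hW : ∀ n < J, scope ρ n ≤ W) (ht₀ : (t₀ : ℝ) < R * j) :
    (#{w : Fin J → Fin W → ZMod 2 | ∃ z : ℕ → ZMod 2, z t₀ = 1 ∧
        z.support ⊆ Set.Ico t₀ (window ρ j) ∧
        (hammingNorm (fun n : Fin j => encode ρ (ofRows w) z n) : ℝ) < δ * (j - firstRow ρ t₀)} : ℝ)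
      ≤ 2 ^ (W * J) * (2 * 2 ^ (-(gapExponent δ R ρ * j))) := by
  have hj : firstRow ρ t₀ ≤ j :=
    (firstRow_lt hρ (ht₀.trans_le (mul_le_mul_of_nonneg_right hRρ j.cast_nonneg))).le
  let low (T : Finset ℕ) : Finset (Fin J → Fin W → ZMod 2) :=
    {w | (hammingNorm (fun n : Fin j => encode ρ (ofRows w) ((T : Set ℕ).indicator 1) n) : ℝ)
      < δ * (j - firstRow ρ t₀)}
  have hlowT : ∀ T ∈ {T ∈ (Ico t₀ (window ρ j)).powerset | t₀ ∈ T},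
      (#(low T) : ℝ) ≤ 2 ^ (W * J) * 2 ^ ((binEnt δ - 1) * (j - firstRow ρ t₀)) := fun T hT =>
    card_lowWeight_le hρ hδ0 hδ hjJ hW hj (by simp [(mem_filter.mp hT).2])
  have hfamily : (#{T ∈ (Ico t₀ (window ρ j)).powerset | t₀ ∈ T} : ℝ) ≤ 2 ^ (window ρ j - t₀) := by
    exact_mod_cast (card_filter_le _ _).trans (by rw [card_powerset, Nat.card_Ico])
  calc _ ≤ (#({T ∈ (Ico t₀ (window ρ j)).powerset | t₀ ∈ T}.biUnion low) : ℝ) := by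
        refine Nat.cast_le.mpr (card_le_card fun w hw => ?_)
        obtain ⟨z, hz, hsupp, hlow⟩ := (mem_filter.mp hw).2
        obtain ⟨T, hT, rfl⟩ := exists_mem_powerset_eq_indicator (s := Ico t₀ (window ρ j))
          (by rwa [coe_Ico])
        refine mem_biUnion.mpr ⟨T, mem_filter.mpr ⟨hT, ?_⟩, mem_filter.mpr ⟨mem_univ _, hlow⟩⟩
        by_contra h
        simp [h] at hz
    _ ≤ ∑ T ∈ {T ∈ (Ico t₀ (window ρ j)).powerset | t₀ ∈ T}, (#(low T) : ℝ) := by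
        exact_mod_cast card_biUnion_le
    _ ≤ 2 ^ (window ρ j - t₀) * (2 ^ (W * J) * 2 ^ ((binEnt δ - 1) * (j - firstRow ρ t₀))) := by
        refine (sum_le_card_nsmul _ _ _ hlowT).trans ?_
        rw [nsmul_eq_mul]
        exact mul_le_mul_of_nonneg_right hfamily (by positivity)
    _ ≤ 2 ^ (W * J) * (2 * 2 ^ (-(gapExponent δ R ρ * j))) := by
        rw [mul_left_comm]
        exact mul_le_mul_of_nonneg_left (two_pow_window_sub_mul_le hρ hRρ hβ ht₀) (by positivity)

open scoped Classical in
theorem card_not_isGoodAt_le (hρ : 0 < ρ) {δ R : ℝ} (hδ0 : 0 < δ) (hδ : δ ≤ 1 / 2)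
    (hR1 : R ≤ 1) (hRρ : R ≤ ρ) (hβ : ρ ≤ 1 - binEnt δ) (j₀ J : ℕ) :
    (#{w : Fin J → Fin (window ρ J) → ZMod 2 | ¬ ∀ j ∈ Icc j₀ J, IsGoodAt δ R ρ (ofRows w) j} : ℝ)
      ≤ 2 ^ (window ρ J * J) * ∑ j ∈ Icc j₀ J, (j : ℝ) * (2 * 2 ^ (-(gapExponent δ R ρ * j))) := by
  set W := window ρ J
  let bad (j t₀ : ℕ) : Finset (Fin J → Fin W → ZMod 2) :=
    {w | ∃ z : ℕ → ZMod 2, z t₀ = 1 ∧ z.support ⊆ Set.Ico t₀ (window ρ j) ∧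
      (hammingNorm (fun n : Fin j => encode ρ (ofRows w) z n) : ℝ) < δ * (j - firstRow ρ t₀)}
  have hbad : ∀ j ∈ Icc j₀ J, ∑ t₀ ∈ range ⌈R * j⌉₊, (#(bad j t₀) : ℝ) ≤
      2 ^ (W * J) * (j * (2 * 2 ^ (-(gapExponent δ R ρ * j)))) := by
    intro j hj
    have hceil : (⌈R * j⌉₊ : ℝ) ≤ j := by
      exact_mod_cast Nat.ceil_le.mpr (mul_le_of_le_one_left j.cast_nonneg hR1)
    refine (sum_le_card_nsmul _ _ _ fun t₀ ht₀ => card_exists_lowWeight_le hρ hδ0 hδ hRρ hβ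
      (mem_Icc.mp hj).2 (fun n hn => scope_le_window hρ.le hn)
      (Nat.lt_ceil.mp (mem_range.mp ht₀))).trans ?_
    rw [card_range, nsmul_eq_mul, mul_left_comm]
    exact mul_le_mul_of_nonneg_left (mul_le_mul_of_nonneg_right hceil (by positivity))
      (by positivity)
  calc _ ≤ (#((Icc j₀ J).biUnion fun j => (range ⌈R * j⌉₊).biUnion (bad j)) : ℝ) := by
        refine Nat.cast_le.mpr (card_le_card fun w hw => ?_)
        simp only [IsGoodAt, mem_filter, mem_univ, true_and, not_forall, not_le] at hw
        obtain ⟨j, hj, t₀, ht₀, z, hz, hsupp, hlow⟩ := hw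
        exact mem_biUnion.mpr ⟨j, hj, mem_biUnion.mpr ⟨t₀, mem_range.mpr ht₀,
          mem_filter.mpr ⟨mem_univ _, z, hz, hsupp, hlow⟩⟩⟩
    _ ≤ ∑ j ∈ Icc j₀ J, ∑ t₀ ∈ range ⌈R * j⌉₊, (#(bad j t₀) : ℝ) := by
        exact_mod_cast card_biUnion_le.trans (sum_le_sum fun j _ => card_biUnion_le)
    _ ≤ _ := by
        rw [mul_sum]
        exact sum_le_sum hbad

theorem exists_rows_isGoodAt (hρ : 0 < ρ) {δ R : ℝ} (hδ0 : 0 < δ) (hδ : δ ≤ 1 / 2)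
    (hR1 : R ≤ 1) (hRρ : R ≤ ρ) (hβ : ρ ≤ 1 - binEnt δ) {j₀ J : ℕ}
    (htail : ∑ j ∈ Icc j₀ J, (j : ℝ) * (2 * 2 ^ (-(gapExponent δ R ρ * j))) < 1) :
    ∃ w : Fin J → Fin (window ρ J) → ZMod 2, ∀ j ∈ Icc j₀ J, IsGoodAt δ R ρ (ofRows w) j := by
  classical
  have hlt : #{w : Fin J → Fin (window ρ J) → ZMod 2 |
      ¬ ∀ j ∈ Icc j₀ J, IsGoodAt δ R ρ (ofRows w) j} <
        #(univ : Finset (Fin J → Fin (window ρ J) → ZMod 2)) := by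
    rw [← Nat.cast_lt (α := ℝ), card_univ]
    refine (card_not_isGoodAt_le hρ hδ0 hδ hR1 hRρ hβ j₀ J).trans_lt ?_
    simpa [pow_mul] using mul_lt_of_lt_one_right (by positivity) htail
  obtain ⟨w, -, hw⟩ := exists_mem_notMem_of_card_lt_card hlt
  exact ⟨w, by simpa using hw⟩

theorem IsGoodAt.congr (hρ : 0 ≤ ρ) {δ R : ℝ} {G G' : ℕ × ℕ → ZMod 2} {j : ℕ}
    (h : ∀ n < j, ∀ t < window ρ j, G (n, t) = G' (n, t)) (hG : IsGoodAt δ R ρ G j) :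
    IsGoodAt δ R ρ G' j := by
  intro t₀ ht₀ z hz hsupp
  convert hG t₀ ht₀ z hz hsupp using 3
  ext n
  exact encode_apply_congr fun t ht => by rw [h n n.2 t (ht.trans_le (scope_le_window hρ n.2))]

theorem exists_isGoodAt (hρ : 0 < ρ) {δ R : ℝ} (hδ0 : 0 < δ) (hδ : δ ≤ 1 / 2) (hR1 : R ≤ 1)
    (hRρ : R < ρ) (hβ : ρ < 1 - binEnt δ) :
    ∃ j₀ : ℕ, ∃ G : ℕ × ℕ → ZMod 2, ∀ j ≥ j₀, IsGoodAt δ R ρ G j := by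
  set γ := gapExponent δ R ρ
  have hγ : 0 < γ := mul_pos (by linarith) (by rw [sub_pos, div_lt_one hρ]; exact hRρ)
  have hq : ‖(2 : ℝ) ^ (-γ)‖ < 1 := by
    rw [Real.norm_of_nonneg (by positivity)]
    exact Real.rpow_lt_one_of_one_lt_of_neg one_lt_two (neg_lt_zero.mpr hγ)
  have hsum : Summable fun j : ℕ => (j : ℝ) * (2 * 2 ^ (-(γ * j))) := by
    refine ((summable_pow_mul_geometric_of_norm_lt_one 1 hq).mul_left 2).congr fun j => ?_
    rw [pow_one, ← Real.rpow_natCast, ← Real.rpow_mul zero_le_two, neg_mul]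
    ring
  obtain ⟨j₀, htail⟩ := hsum.exists_sum_Icc_lt_one
  refine ⟨j₀, ?_⟩
  obtain ⟨G, hG⟩ := exists_forall_mem_of_forall_exists
    (P := fun j => {G : ℕ × ℕ → ZMod 2 | j₀ ≤ j → IsGoodAt δ R ρ G j})
    (fun j => ⟨range j ×ˢ range (window ρ j), fun G G' hGG' hG hj => (hG hj).congr hρ.le
      fun n hn t ht => hGG' (n, t) (mem_product.mpr ⟨mem_range.mpr hn, mem_range.mpr ht⟩)⟩)
    fun J => by
      obtain ⟨w, hw⟩ := exists_rows_isGoodAt hρ hδ0 hδ hR1 hRρ.le hβ.le (htail J)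
      exact ⟨ofRows w, fun j hjJ hj => hw j (mem_Icc.mpr ⟨hj, hjJ⟩)⟩
  exact ⟨G, fun j hj => hG j hj⟩

end UnboundedCode

end

open UnboundedCode in
/-- For every `ε < 1/17` and `R < 1 − H(3ε)` there exists a linear unbounded code over
`𝔽₂` with rate `R` resilient to `BSC(ε)` noise: there are `k₀`, `c > 0` and a decoder
`D` such that for all messages `x`, all `i ≥ k₀` and `j ≥ i/R`, the probability (over
i.i.d. `Bernoulli(ε)` flips of the first `j` codeword bits) that `D` fails to recover
`x[:i]` is at most `exp(−c j)`.  The probability is written as a sum over all noise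
patterns `η ∈ 𝔽₂^j`, weighted by `∏ (if η t = 1 then ε else 1 − ε)`. -/
theorem exists_linear_unbounded_code_bsc
    (ε R : ℝ) (hε0 : 0 < ε) (hε : ε < 1 / 17) (hR0 : 0 < R)
    (hR : R < 1 - binEnt (3 * ε)) :
    ∃ C : (ℕ → ZMod 2) → (ℕ → ZMod 2),
      (∀ x y, C (x + y) = C x + C y) ∧
      ∃ (k₀ : ℕ) (c : ℝ), 0 < c ∧
        ∃ D : (m : ℕ) → (Fin m → ZMod 2) → (ℕ → ZMod 2),
          ∀ (x : ℕ → ZMod 2) (i j : ℕ), k₀ ≤ i → (i : ℝ) ≤ R * j →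
            (∑ η : Fin j → ZMod 2,
              (∏ t : Fin j, if η t = 1 then ε else 1 - ε) *
                Set.indicator
                  {η' : Fin j → ZMod 2 |
                    ∃ t < i, D j (fun s => C x (s : ℕ) + η' s) t ≠ x t}
                  (fun _ => (1 : ℝ)) η) ≤ Real.exp (-c * j) := by
  have hH := binEnt_pos (by positivity : 0 < 3 * ε) (by linarith)
  set ρ := (R + (1 - binEnt (3 * ε))) / 2 with hρ_def
  have hRρ : R < ρ := by linarith
  have hρ0 : 0 < ρ := hR0.trans hRρ
  obtain ⟨j₀, G, hG⟩ := exists_isGoodAt (δ := 3 * ε) hρ0 (by positivity) (by linarith)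
    (by linarith) hRρ (by linarith)
  set κ := ε * (3 / 2 * Real.log 2 - 1) * (1 - R / ρ)
  have hκ : 0 < κ := mul_pos (mul_pos hε0 (by linarith [Real.log_two_gt_d9]))
    (by rw [sub_pos, div_lt_one hρ0]; exact hRρ)
  obtain ⟨N, hN⟩ := exists_nat_mul_exp_le hκ
  refine ⟨encode ρ G, map_add _, max j₀ N, κ / 2, by positivity, decode ρ G,
    fun x i j hi hij => ?_⟩
  have hij' : i ≤ j := by
    exact_mod_cast hij.trans (mul_le_of_le_one_left j.cast_nonneg (by linarith))
  have hj : max j₀ N ≤ j := hi.trans hij'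
  calc _ ≤ i * Real.exp (-κ * j) :=
        bscProb_decode_ne_le hε0.le (by linarith) hρ0 hRρ.le (hG j (le_of_max_le_left hj)) x hij
    _ ≤ j * Real.exp (-κ * j) := by gcongr
    _ ≤ Real.exp (-(κ / 2) * j) := hN j (le_of_max_le_right hj)
end
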